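/- arXiv:0801.0920 — 3 statements merged into one kernel-verified Lean document; each statement's English description precedes it below -/
import Mathlib

section
/- Let O be the ring of integers of a finite unramified extension of ℚ_ℓ and f a distinguished polynomial in O[T] (monic with all lower coefficients divisible by ℓ). Then for all sufficiently large n there exist polynomials a_n, b_n in O[T] such that ω_{n+1}/ω_n = Σ_{k=0}^{ℓ−1}(1+T)^{kℓ^n} = ℓ(1 + ℓa_n) + b_n f, where ω_n = (1+T)^{ℓ^n} − 1. Moreover 1 + ℓa_n is a unit in the local ring O[[T]]. -/
/-- A distinguished polynomial over `O`: monic, with all lower coefficients divisible by `ℓ`. -/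
def IsDistinguishedAt {O : Type*} [CommRing O] (ℓ : ℕ) (f : Polynomial O) : Prop :=
  f.Monic ∧ ∀ i < f.natDegree, f.coeff i ∈ Ideal.span {(ℓ : O)}

/-!
Modulo `f` we have `T ^ deg f ≡ 0 mod ℓ`, so once `ℓ ^ m ≥ deg f` the Frobenius congruence
`(1 + T) ^ ℓ ^ m ≡ 1 + T ^ ℓ ^ m` gives `(1 + T) ^ ℓ ^ m ≡ 1 mod ℓ` in `O[T]/(f)`, and raising to
the `ℓ`-th power, `u := (1 + T) ^ ℓ ^ (m + 1) ≡ 1 mod ℓ²`. Hence `Σ_{k<ℓ} u ^ k ≡ ℓ mod ℓ²` in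
`O[T]/(f)`, which is the decomposition. The constant term `1 + ℓ a(0)` is a unit of `O` since `ℓ`
lies in every maximal ideal, so `1 + ℓ a` is a unit of `O[[T]]`.
-/

open Polynomial Finset

theorem sub_one_dvd_geom_sum_sub_natCast {R : Type*} [CommRing R] (x : R) (n : ℕ) :
    x - 1 ∣ ∑ i ∈ range n, x ^ i - n := by
  simpa using sub_dvd_eval_sub x 1 (∑ i ∈ range n, X ^ i)

theorem pow_succ_dvd_one_add_pow_sub_one {R : Type*} [CommRing R] {p : ℕ} (hp : p.Prime)
    {x : R} {m : ℕ} (hx : (p : R) ∣ x ^ p ^ m) (k : ℕ) :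
    (p : R) ^ (k + 1) ∣ (1 + x) ^ p ^ (m + k) - 1 := by
  obtain ⟨r, hr⟩ := exists_add_pow_prime_pow_eq hp (1 : R) x m
  have h : (p : R) ∣ (1 + x) ^ p ^ m - 1 := by
    have hsub : (1 + x) ^ p ^ m - 1 = x ^ p ^ m + p * (x * r) := by rw [hr]; ring
    exact hsub ▸ dvd_add hx (dvd_mul_right _ _)
  simpa [pow_add, pow_mul] using dvd_sub_pow_of_dvd_sub h k

theorem IsDistinguishedAt.natCast_dvd_sub_X_pow {O : Type*} [CommRing O] {ℓ : ℕ} {f : O[X]}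
    (hf : IsDistinguishedAt ℓ f) : (ℓ : O[X]) ∣ f - X ^ f.natDegree := by
  rw [← C_eq_natCast, C_dvd_iff_dvd_coeff]
  intro i
  simp only [← Ideal.mem_span_singleton]
  rcases lt_trichotomy i f.natDegree with h | rfl | h
  · simpa [coeff_X_pow, h.ne] using hf.2 i h
  · simp [hf.1.coeff_natDegree]
  · simp [coeff_X_pow, h.ne', coeff_eq_zero_of_natDegree_lt h]

theorem IsDistinguishedAt.natCast_dvd_mk_X_pow {O : Type*} [CommRing O] {ℓ : ℕ} {f : O[X]}
    (hf : IsDistinguishedAt ℓ f) :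
    (ℓ : O[X] ⧸ Ideal.span {f}) ∣ Ideal.Quotient.mk _ X ^ f.natDegree := by
  have h := map_dvd (Ideal.Quotient.mk (Ideal.span {f})) hf.natCast_dvd_sub_X_pow
  rw [map_sub, Ideal.Quotient.mk_singleton_self, zero_sub] at h
  simpa using dvd_neg.mp h

theorem exists_eq_mul_add_mul_of_mk_dvd {R : Type*} [CommRing R] {f c x : R}
    (h : Ideal.Quotient.mk (Ideal.span {f}) c ∣ Ideal.Quotient.mk _ x) :
    ∃ a b, x = c * a + b * f := by
  obtain ⟨y, hy⟩ := h
  obtain ⟨a, rfl⟩ := Ideal.Quotient.mk_surjective y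
  rw [← map_mul, Ideal.Quotient.eq, Ideal.mem_span_singleton'] at hy
  obtain ⟨b, hb⟩ := hy
  exact ⟨a, b, by rw [hb]; ring⟩

theorem isUnit_coe_one_add_of_coeff_zero_mem_jacobson {R : Type*} [CommRing R] {p : R[X]}
    (hp : p.coeff 0 ∈ (⊥ : Ideal R).jacobson) : IsUnit ((1 + p : R[X]) : PowerSeries R) := by
  rw [PowerSeries.isUnit_iff_constantCoeff, Polynomial.constantCoeff_coe, coeff_add, coeff_one_zero,
    add_comm]
  simpa using Ideal.mem_jacobson_bot.mp hp 1

theorem natCast_sq_dvd_geom_sum_one_add_pow_sub {R : Type*} [CommRing R] {p : ℕ} (hp : p.Prime)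
    {x : R} {d n : ℕ} (hx : (p : R) ∣ x ^ d) (hn : d < n) :
    (p : R) ^ 2 ∣ ∑ k ∈ range p, ((1 + x) ^ p ^ n) ^ k - p := by
  obtain ⟨m, rfl⟩ := Nat.exists_eq_add_of_lt hn
  have hxm : (p : R) ∣ x ^ p ^ (d + m) :=
    hx.trans (pow_dvd_pow x ((Nat.le_add_right d m).trans (Nat.lt_pow_self hp.one_lt).le))
  exact (pow_succ_dvd_one_add_pow_sub_one hp hxm 1).trans (sub_one_dvd_geom_sum_sub_natCast _ _)

theorem omega_ratio_decomposition_general (ℓ : ℕ) [Fact ℓ.Prime]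
    (O : Type*) [CommRing O]
    (huniq : ∀ M : Ideal O, M.IsMaximal → M = Ideal.span {(ℓ : O)})
    (f : Polynomial O) (hf : IsDistinguishedAt ℓ f) :
    ∃ n₀ : ℕ, ∀ n ≥ n₀, ∃ a b : Polynomial O,
      ((1 + Polynomial.X : Polynomial O) ^ (ℓ ^ n) - 1) *
          (∑ k ∈ Finset.range ℓ, (1 + Polynomial.X : Polynomial O) ^ (k * ℓ ^ n)) =
        (1 + Polynomial.X : Polynomial O) ^ (ℓ ^ (n + 1)) - 1 ∧
      (∑ k ∈ Finset.range ℓ, (1 + Polynomial.X : Polynomial O) ^ (k * ℓ ^ n)) =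
        (ℓ : Polynomial O) * (1 + (ℓ : Polynomial O) * a) + b * f ∧
      IsUnit ((1 + (ℓ : Polynomial O) * a : Polynomial O) : PowerSeries O) := by
  have hsum : ∀ n, ∑ k ∈ range ℓ, (1 + X : O[X]) ^ (k * ℓ ^ n) =
      ∑ k ∈ range ℓ, ((1 + X) ^ ℓ ^ n) ^ k := fun n => by simp only [← pow_mul, mul_comm]
  refine ⟨f.natDegree + 1, fun n hn => ?_⟩
  have hdvd := natCast_sq_dvd_geom_sum_one_add_pow_sub Fact.out hf.natCast_dvd_mk_X_pow
    (Nat.lt_of_succ_le hn)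
  obtain ⟨a, b, hab⟩ :
      ∃ a b, ∑ k ∈ range ℓ, (1 + X : O[X]) ^ (k * ℓ ^ n) - ℓ = ℓ ^ 2 * a + b * f :=
    exists_eq_mul_add_mul_of_mk_dvd (by simpa [hsum] using hdvd)
  refine ⟨a, b, ?_, by linear_combination hab, ?_⟩
  · rw [hsum, mul_geom_sum, ← pow_mul, ← pow_succ]
  · have hℓ : (ℓ : O) ∈ (⊥ : Ideal O).jacobson :=
      Ideal.mem_sInf.mpr fun M hM => huniq M hM.2 ▸ Ideal.mem_span_singleton_self _
    exact isUnit_coe_one_add_of_coeff_zero_mem_jacobson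
      (by simpa using Ideal.mul_mem_right (a.coeff 0) _ hℓ)

/-- For `O` the ring of integers of a finite unramified extension of `ℚ_ℓ` and `f`
distinguished in `O[T]`, for all sufficiently large `n` one can write
`ω_{n+1}/ω_n = Σ_{k<ℓ} (1+T)^(kℓ^n) = ℓ(1 + ℓa_n) + b_n f`, with `1 + ℓa_n` a unit
in `O[[T]]`. -/
theorem omega_ratio_decomposition (ℓ : ℕ) [Fact ℓ.Prime]
    (O : Type*) [CommRing O] [IsDomain O] [Algebra ℤ_[ℓ] O]
    [Module.Finite ℤ_[ℓ] O] [Module.Free ℤ_[ℓ] O]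
    (hmax : (Ideal.span {(ℓ : O)}).IsMaximal)
    (huniq : ∀ M : Ideal O, M.IsMaximal → M = Ideal.span {(ℓ : O)})
    (f : Polynomial O) (hf : IsDistinguishedAt ℓ f) :
    ∃ n₀ : ℕ, ∀ n ≥ n₀, ∃ a b : Polynomial O,
      ((1 + Polynomial.X : Polynomial O) ^ (ℓ ^ n) - 1) *
          (∑ k ∈ Finset.range ℓ, (1 + Polynomial.X : Polynomial O) ^ (k * ℓ ^ n)) =
        (1 + Polynomial.X : Polynomial O) ^ (ℓ ^ (n + 1)) - 1 ∧
      (∑ k ∈ Finset.range ℓ, (1 + Polynomial.X : Polynomial O) ^ (k * ℓ ^ n)) =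
        (ℓ : Polynomial O) * (1 + (ℓ : Polynomial O) * a) + b * f ∧
      IsUnit ((1 + (ℓ : Polynomial O) * a : Polynomial O) : PowerSeries O) :=
  omega_ratio_decomposition_general ℓ O huniq f hf
end

section
/- Let O be the valuation ring of a finite unramified extension of ℚ_ℓ of degree d over ℤ_ℓ, m a positive integer, and X = Λ_O/ℓ^mΛ_O with Λ_O = O[[T]]. Then for every n ≥ m the index (X : ∇_nX) equals ℓ^{m·ℓ^n·d}, where ∇_n = ℓ^{n+1}X + ω_nX and ω_n = (1+T)^{ℓ^n} − 1. -/
/-!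
Since `ℓ ^ (n + 1) ∈ (ℓ ^ m)`, the quotient `X / ∇_n X` is `Λ_O / (ℓ ^ m, ω_n)`. By Frobenius,
`ω_n ≡ T ^ (ℓ ^ n) (mod ℓ)`, so `T ^ (m ℓ ^ n) ∈ (ℓ ^ m, ω_n)`: every power series may be truncated,
and `Λ_O / (ℓ ^ m, ω_n) ≅ O[T] / (ℓ ^ m, ω_n)`. As `ω_n` is monic of degree `ℓ ^ n`, `O[T] / (ω_n)`
is free of rank `ℓ ^ n` over `O`, itself free of rank `d` over `ℤ_ℓ`, so reducing modulo `ℓ ^ m`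
leaves `(ℓ ^ m) ^ (ℓ ^ n d)` elements.
-/

/-- `ω_n = (1+T)^(ℓ^n) - 1` in `Λ_O = O[[T]]`. -/
noncomputable def omegaO (O : Type*) [CommRing O] (ℓ n : ℕ) : PowerSeries O :=
  (1 + PowerSeries.X) ^ (ℓ ^ n) - 1

/-- `∇_n = ℓ^(n+1)Λ_O + ω_nΛ_O`. -/
noncomputable def nablaO (O : Type*) [CommRing O] (ℓ n : ℕ) : Ideal (PowerSeries O) :=
  Ideal.span {(ℓ : PowerSeries O) ^ (n + 1), omegaO O ℓ n}

open Polynomial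

namespace Module.Basis

variable {R M S : Type*} [CommRing R] [AddCommGroup M] [Module R M] [CommRing S] [Algebra R S]
  {ι : Type*} [Fintype ι]

theorem natCard_quotient_smul_top (b : Basis ι R M) (I : Ideal R) :
    Nat.card (M ⧸ I • (⊤ : Submodule R M)) = Nat.card (R ⧸ I) ^ Fintype.card ι := by
  rw [← Nat.card_congr (TensorProduct.quotTensorEquivQuotSMul M I).toEquiv,
    Nat.card_congr (Algebra.TensorProduct.basis (R ⧸ I) b).equivFun.toEquiv, Nat.card_fun,
    Nat.card_eq_fintype_card (α := ι)]

theorem natCard_quotient_map_algebraMap (b : Basis ι R S) (I : Ideal R) :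
    Nat.card (S ⧸ I.map (algebraMap R S)) = Nat.card (R ⧸ I) ^ Fintype.card ι := by
  rw [← b.natCard_quotient_smul_top I, Ideal.smul_top_eq_map]
  exact Nat.card_congr (Submodule.Quotient.restrictScalarsEquiv R _).toEquiv.symm

end Module.Basis

namespace Ideal

variable {R : Type*} [CommRing R]

theorem natCard_quotient_smul_top_quotient (I J : Ideal R) :
    Nat.card ((R ⧸ I) ⧸ J • (⊤ : Submodule R (R ⧸ I))) = Nat.card (R ⧸ (I ⊔ J)) := by
  rw [smul_top_eq_map, Quotient.algebraMap_eq,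
    ← Nat.card_congr (DoubleQuot.quotQuotEquivQuotSup I J).toEquiv]
  exact Nat.card_congr (Submodule.Quotient.restrictScalarsEquiv R _).toEquiv

theorem span_singleton_sup_span_pair_of_dvd {a b : R} (c : R) (h : a ∣ b) :
    span {a} ⊔ span {b, c} = span {a, c} := by
  rw [span_insert, ← sup_assoc, sup_eq_left.2 (span_singleton_le_span_singleton.2 h),
    ← span_insert]

theorem pow_mem_span_pow_insert {x c a : R} (hx : x ∈ span {c, a}) (m : ℕ) :
    x ^ m ∈ span {c ^ m, a} := by
  obtain ⟨y, z, rfl⟩ := mem_span_pair.1 hx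
  obtain ⟨q, hq⟩ := sub_dvd_pow_sub_pow (y * c + z * a) (y * c) m
  refine mem_span_pair.2 ⟨y ^ m, z * q, ?_⟩
  linear_combination (-1 : R) * hq

end Ideal

theorem PadicInt.natCard_quotient_span_pow (p : ℕ) [Fact p.Prime] (n : ℕ) :
    Nat.card (ℤ_[p] ⧸ Ideal.span {(p : ℤ_[p]) ^ n}) = p ^ n := by
  rw [← ker_toZModPow, Nat.card_congr
    (RingHom.quotientKerEquivOfSurjective (ZMod.ringHom_surjective (toZModPow n))).toEquiv,
    Nat.card_zmod]

theorem natCard_quotient_span_natCast_pow (ℓ : ℕ) [Fact ℓ.Prime] (O : Type*) [CommRing O]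
    [Algebra ℤ_[ℓ] O] [Module.Finite ℤ_[ℓ] O] [Module.Free ℤ_[ℓ] O] (m : ℕ) :
    Nat.card (O ⧸ Ideal.span {(ℓ : O) ^ m}) = ℓ ^ (m * Module.finrank ℤ_[ℓ] O) := by
  have hmap : Ideal.span {(ℓ : O) ^ m} =
      (Ideal.span {(ℓ : ℤ_[ℓ]) ^ m}).map (algebraMap ℤ_[ℓ] O) := by
    rw [Ideal.map_span, Set.image_singleton, map_pow, map_natCast]
  rw [hmap, (Module.Free.chooseBasis ℤ_[ℓ] O).natCard_quotient_map_algebraMap,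
    PadicInt.natCard_quotient_span_pow, ← Module.finrank_eq_card_chooseBasisIndex, pow_mul]

theorem Polynomial.Monic.natCard_quotient_map_C_sup_span {R : Type*} [CommRing R] {f : R[X]}
    (hf : f.Monic) (I : Ideal R) :
    Nat.card (R[X] ⧸ (I.map C ⊔ Ideal.span {f})) = Nat.card (R ⧸ I) ^ f.natDegree := by
  have hmap : (I.map C).map (AdjoinRoot.mk f) = I.map (algebraMap R (AdjoinRoot f)) := by
    rw [Ideal.map_map, AdjoinRoot.algebraMap_eq, AdjoinRoot.of]
  have hcard := (AdjoinRoot.powerBasis' hf).basis.natCard_quotient_map_algebraMap I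
  rw [Fintype.card_fin, AdjoinRoot.powerBasis'_dim, ← hmap] at hcard
  rw [sup_comm, ← Nat.card_congr (DoubleQuot.quotQuotEquivQuotSup _ _).toEquiv]
  exact hcard

section Truncation

variable {R : Type*} [CommRing R] {D : ℕ} {J : Ideal R[X]}

theorem PowerSeries.X_pow_dvd_sub_trunc (D : ℕ) (f : PowerSeries R) :
    PowerSeries.X ^ D ∣ f - (PowerSeries.trunc D f : PowerSeries R) :=
  ⟨PowerSeries.mk fun i => PowerSeries.coeff (i + D) f,
    by linear_combination PowerSeries.eq_X_pow_mul_shift_add_trunc D f⟩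

theorem Polynomial.X_pow_dvd_sub_trunc_coe (D : ℕ) (p : R[X]) :
    X ^ D ∣ p - PowerSeries.trunc D (p : PowerSeries R) := by
  rw [X_pow_dvd_iff]
  intro d hd
  rw [coeff_sub, PowerSeries.coeff_trunc, if_pos hd, coeff_coe, sub_self]

theorem Polynomial.quotient_mk_trunc_coe (hJ : X ^ D ∈ J) (p : R[X]) :
    Ideal.Quotient.mk J (PowerSeries.trunc D (p : PowerSeries R)) = Ideal.Quotient.mk J p := by
  refine (Ideal.Quotient.eq.2 ?_).symm
  obtain ⟨q, hq⟩ := X_pow_dvd_sub_trunc_coe D p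
  rw [hq]
  exact J.mul_mem_right q hJ

noncomputable def PowerSeries.truncQuotient (hJ : (Polynomial.X : R[X]) ^ D ∈ J) : PowerSeries R →+* R[X] ⧸ J where
  toFun f := Ideal.Quotient.mk J (PowerSeries.trunc D f)
  map_one' := by simpa using quotient_mk_trunc_coe hJ 1
  map_mul' f g := by
    change Ideal.Quotient.mk J _ = Ideal.Quotient.mk J _ * Ideal.Quotient.mk J _
    rw [← map_mul, ← PowerSeries.trunc_trunc_mul_trunc, ← Polynomial.coe_mul, quotient_mk_trunc_coe hJ]
  map_zero' := by simp
  map_add' f g := by simp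

theorem PowerSeries.truncQuotient_coe (hJ : (Polynomial.X : R[X]) ^ D ∈ J) (p : R[X]) :
    truncQuotient hJ (p : PowerSeries R) = Ideal.Quotient.mk J p :=
  quotient_mk_trunc_coe hJ p

noncomputable def Polynomial.quotientEquivPowerSeriesQuotient (hJ : X ^ D ∈ J) :
    R[X] ⧸ J ≃+* PowerSeries R ⧸ J.map coeToPowerSeries.ringHom := by
  have hX : (PowerSeries.X : PowerSeries R) ^ D ∈ J.map coeToPowerSeries.ringHom := by
    simpa using Ideal.mem_map_of_mem coeToPowerSeries.ringHom hJ
  refine RingEquiv.ofRingHom (Ideal.quotientMap _ coeToPowerSeries.ringHom Ideal.le_comap_map)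
    (Ideal.Quotient.lift _ (PowerSeries.truncQuotient hJ) fun f hf => ?_) ?_ ?_
  · refine RingHom.mem_ker.1 <| (Ideal.map_le_iff_le_comap.2 fun p hp => ?_) hf
    rw [Ideal.mem_comap, RingHom.mem_ker, coeToPowerSeries.ringHom_apply,
      PowerSeries.truncQuotient_coe, Ideal.Quotient.eq_zero_iff_mem]
    exact hp
  · refine Ideal.Quotient.ringHom_ext (RingHom.ext fun f => ?_)
    obtain ⟨q, hq⟩ := PowerSeries.X_pow_dvd_sub_trunc D f
    refine (Ideal.Quotient.eq.2 ?_).symm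
    rw [coeToPowerSeries.ringHom_apply, hq]
    exact Ideal.mul_mem_right _ _ hX
  · refine Ideal.Quotient.ringHom_ext (RingHom.ext fun p => ?_)
    simp [PowerSeries.truncQuotient_coe]

end Truncation

noncomputable def omegaPoly (R : Type*) [CommRing R] (ℓ n : ℕ) : R[X] :=
  (1 + X) ^ (ℓ ^ n) - 1

section omegaPoly

variable {R : Type*} [CommRing R] (ℓ n : ℕ)

theorem coe_omegaPoly : (omegaPoly R ℓ n : PowerSeries R) = omegaO R ℓ n := by
  simp [omegaPoly, omegaO]

theorem omegaPoly_eq : omegaPoly R ℓ n = (X + C 1) ^ ℓ ^ n - C 1 := by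
  rw [omegaPoly, C_1, add_comm]

theorem natDegree_omegaPoly [Nontrivial R] : (omegaPoly R ℓ n).natDegree = ℓ ^ n := by
  rw [omegaPoly_eq, natDegree_sub_C, natDegree_pow_X_add_C]

theorem monic_omegaPoly [Nontrivial R] (hℓ : ℓ ≠ 0) : (omegaPoly R ℓ n).Monic := by
  rw [omegaPoly_eq]
  refine ((monic_X_add_C 1).pow _).sub_of_left ?_
  rw [degree_C one_ne_zero, ← natDegree_pos_iff_degree_pos, natDegree_pow_X_add_C]
  exact Nat.pos_of_ne_zero (pow_ne_zero n hℓ)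

theorem X_pow_mem_span_natCast_omegaPoly (hℓ : ℓ.Prime) :
    X ^ ℓ ^ n ∈ Ideal.span {(ℓ : R[X]), omegaPoly R ℓ n} := by
  obtain ⟨r, hr⟩ := exists_add_pow_prime_pow_eq hℓ (X : R[X]) 1 n
  refine Ideal.mem_span_pair.2 ⟨-(X * r), 1, ?_⟩
  rw [omegaPoly, add_comm 1 X, hr]
  ring

end omegaPoly

theorem card_quotient_nabla_ell_power_general (ℓ : ℕ) [Fact ℓ.Prime]
    (O : Type*) [CommRing O] [IsDomain O] [Algebra ℤ_[ℓ] O]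
    [Module.Finite ℤ_[ℓ] O] [Module.Free ℤ_[ℓ] O]
    (m : ℕ) (n : ℕ) (hn : m ≤ n) :
    Nat.card ((PowerSeries O ⧸ Ideal.span {(ℓ : PowerSeries O) ^ m}) ⧸
        (nablaO O ℓ n • (⊤ : Submodule (PowerSeries O)
          (PowerSeries O ⧸ Ideal.span {(ℓ : PowerSeries O) ^ m})))) =
      ℓ ^ (m * ℓ ^ n * Module.finrank ℤ_[ℓ] O) := by
  have hℓ : ℓ.Prime := Fact.out
  set J : Ideal O[X] := Ideal.span {(ℓ : O[X]) ^ m, omegaPoly O ℓ n}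
  have hJ_map : J.map coeToPowerSeries.ringHom =
      Ideal.span {(ℓ : PowerSeries O) ^ m} ⊔ nablaO O ℓ n := by
    rw [nablaO, Ideal.span_singleton_sup_span_pair_of_dvd _ (pow_dvd_pow _ (by omega)),
      Ideal.map_span, Set.image_pair, map_pow, map_natCast, coeToPowerSeries.ringHom_apply,
      coe_omegaPoly]
  have hX_mem : X ^ (ℓ ^ n * m) ∈ J := by
    rw [pow_mul]
    exact Ideal.pow_mem_span_pow_insert (X_pow_mem_span_natCast_omegaPoly ℓ n hℓ) m
  have hJ : J = (Ideal.span {(ℓ : O) ^ m}).map C ⊔ Ideal.span {omegaPoly O ℓ n} := by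
    rw [Ideal.map_span, Set.image_singleton, map_pow, map_natCast, ← Ideal.span_insert]
  rw [Ideal.natCard_quotient_smul_top_quotient, ← hJ_map,
    ← Nat.card_congr (quotientEquivPowerSeriesQuotient hX_mem).toEquiv, hJ,
    (monic_omegaPoly ℓ n hℓ.ne_zero).natCard_quotient_map_C_sup_span, natDegree_omegaPoly,
    natCard_quotient_span_natCast_pow, ← pow_mul]
  ring

/-- For `X = Λ_O/ℓ^mΛ_O` with `O` the valuation ring of a finite unramified extension of
`ℚ_ℓ` of degree `d` and `m ≥ 1`, for every `n ≥ m` the index `(X : ∇_nX)` equals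
`ℓ^(m·ℓ^n·d)`. -/
theorem card_quotient_nabla_ell_power (ℓ : ℕ) [Fact ℓ.Prime]
    (O : Type*) [CommRing O] [IsDomain O] [Algebra ℤ_[ℓ] O]
    [Module.Finite ℤ_[ℓ] O] [Module.Free ℤ_[ℓ] O]
    (hmax : (Ideal.span {(ℓ : O)}).IsMaximal)
    (huniq : ∀ M : Ideal O, M.IsMaximal → M = Ideal.span {(ℓ : O)})
    (m : ℕ) (hm : 0 < m) (n : ℕ) (hn : m ≤ n) :
    Nat.card ((PowerSeries O ⧸ Ideal.span {(ℓ : PowerSeries O) ^ m}) ⧸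
        (nablaO O ℓ n • (⊤ : Submodule (PowerSeries O)
          (PowerSeries O ⧸ Ideal.span {(ℓ : PowerSeries O) ^ m})))) =
      ℓ ^ (m * ℓ ^ n * Module.finrank ℤ_[ℓ] O) :=
  card_quotient_nabla_ell_power_general ℓ O m n hn
end

section
/- Let T be a finitely generated torsion Λ-module (Λ = ℤ_ℓ[[T]]) that is elementary, i.e., a finite direct sum of modules Λ/ℓ^{m_j}Λ and Λ/f_iΛ with f_i distinguished polynomials. Set ∂^nT = ℓ^{n+1}T ∩ ω_nT with ω_n = (1+T)^{ℓ^n} − 1. Then there exists n_0 such that for all n ≥ n_0, ∂^nT = ℓ^{n−n_0}·∂^{n_0}T. -/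
/-- `ω_n = (1+T)^(ℓ^n) - 1` in the Iwasawa algebra `Λ = ℤ_ℓ[[T]]`. -/
noncomputable def omegaIw (ℓ : ℕ) [Fact ℓ.Prime] (n : ℕ) : PowerSeries ℤ_[ℓ] :=
  (1 + PowerSeries.X) ^ (ℓ ^ n) - 1

namespace Submodule

variable {R M M' : Type*} [CommRing R] [AddCommGroup M] [Module R M] [AddCommGroup M'] [Module R M']

theorem mem_ideal_span_singleton_smul {r : R} {N : Submodule R M} {x : M} :
    x ∈ Ideal.span {r} • N ↔ ∃ y ∈ N, r • y = x := by
  rw [ideal_span_singleton_smul, mem_smul_pointwise_iff_exists]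

theorem ideal_span_singleton_smul_prod (r : R) (N : Submodule R M) (N' : Submodule R M') :
    Ideal.span {r} • N.prod N' = (Ideal.span {r} • N).prod (Ideal.span {r} • N') := by
  ext ⟨x, x'⟩
  simp only [mem_ideal_span_singleton_smul, mem_prod, Prod.exists, Prod.smul_mk, Prod.mk.injEq]
  constructor
  · rintro ⟨y, y', ⟨hy, hy'⟩, rfl, rfl⟩
    exact ⟨⟨y, hy, rfl⟩, y', hy', rfl⟩
  · rintro ⟨⟨y, hy, rfl⟩, y', hy', rfl⟩
    exact ⟨y, y', ⟨hy, hy'⟩, rfl, rfl⟩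

theorem ideal_span_singleton_smul_pi {ι : Type*} {M : ι → Type*} [∀ i, AddCommGroup (M i)]
    [∀ i, Module R (M i)] (r : R) (N : ∀ i, Submodule R (M i)) :
    Ideal.span {r} • pi Set.univ N = pi Set.univ fun i ↦ Ideal.span {r} • N i := by
  ext x
  simp only [mem_ideal_span_singleton_smul, mem_pi, Set.mem_univ, true_implies]
  constructor
  · rintro ⟨y, hy, rfl⟩ i
    exact ⟨y i, hy i, rfl⟩
  · intro h
    choose y hy hyx using h
    exact ⟨y, hy, funext hyx⟩

theorem pi_inf_pi {ι : Type*} {M : ι → Type*} [∀ i, AddCommGroup (M i)]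
    [∀ i, Module R (M i)] (N N' : ∀ i, Submodule R (M i)) :
    pi Set.univ N ⊓ pi Set.univ N' = pi Set.univ fun i ↦ N i ⊓ N' i := by
  ext x
  simp only [mem_inf, mem_pi, Set.mem_univ, true_implies, forall_and]

theorem ideal_span_singleton_smul_inf {r : R} (hr : IsSMulRegular M r) (N N' : Submodule R M) :
    Ideal.span {r} • (N ⊓ N') = Ideal.span {r} • N ⊓ Ideal.span {r} • N' := by
  refine le_antisymm (le_inf (smul_mono_right _ inf_le_left) (smul_mono_right _ inf_le_right))
    fun x hx ↦ ?_
  obtain ⟨y, hy, rfl⟩ := mem_ideal_span_singleton_smul.mp (mem_inf.mp hx).1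
  obtain ⟨y', hy', hyy'⟩ := mem_ideal_span_singleton_smul.mp (mem_inf.mp hx).2
  exact mem_ideal_span_singleton_smul.mpr ⟨y, ⟨hy, hr hyy' ▸ hy'⟩, rfl⟩

theorem ideal_span_singleton_smul_le_of_dvd {A : Type*} [CommRing A] [Algebra R A] {r s : R}
    (h : algebraMap R A s ∣ algebraMap R A r) :
    Ideal.span {r} • (⊤ : Submodule R A) ≤ Ideal.span {s} • ⊤ := by
  obtain ⟨c, hc⟩ := h
  intro x hx
  obtain ⟨y, -, rfl⟩ := mem_ideal_span_singleton_smul.mp hx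
  refine mem_ideal_span_singleton_smul.mpr ⟨c * y, mem_top, ?_⟩
  rw [Algebra.smul_def, Algebra.smul_def, hc, mul_assoc]

end Submodule

section Nabla

open Submodule

variable {R : Type*} [CommRing R] (ℓ : R) (ω : ℕ → R)
variable (M : Type*) [AddCommGroup M] [Module R M]

def nabla (n : ℕ) : Submodule R M :=
  Ideal.span {ℓ ^ (n + 1)} • ⊤ ⊓ Ideal.span {ω n} • ⊤

def NablaStableFrom (n₀ : ℕ) : Prop :=
  ∀ n ≥ n₀, nabla ℓ ω M n = Ideal.span {ℓ ^ (n - n₀)} • nabla ℓ ω M n₀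

variable {ℓ ω M}

theorem NablaStableFrom.mono {n₀ n₁ : ℕ} (h : NablaStableFrom ℓ ω M n₀) (hn : n₀ ≤ n₁) :
    NablaStableFrom ℓ ω M n₁ := by
  intro n hn₁
  rw [h n (hn.trans hn₁), h n₁ hn, ← Submodule.mul_smul, Ideal.span_singleton_mul_span_singleton,
    ← pow_add, Nat.sub_add_sub_cancel hn₁ hn]

theorem nabla_prod (M' : Type*) [AddCommGroup M'] [Module R M'] (n : ℕ) :
    nabla ℓ ω (M × M') n = (nabla ℓ ω M n).prod (nabla ℓ ω M' n) := by
  rw [nabla, ← prod_top, ideal_span_singleton_smul_prod, ideal_span_singleton_smul_prod,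
    prod_inf_prod]
  rfl

theorem nabla_pi {ι : Type*} (M : ι → Type*) [∀ i, AddCommGroup (M i)] [∀ i, Module R (M i)]
    (n : ℕ) : nabla ℓ ω (∀ i, M i) n = pi Set.univ fun i ↦ nabla ℓ ω (M i) n := by
  rw [nabla, ← pi_top Set.univ, ideal_span_singleton_smul_pi, ideal_span_singleton_smul_pi,
    pi_inf_pi]
  rfl

theorem NablaStableFrom.prod {M' : Type*} [AddCommGroup M'] [Module R M'] {n₀ : ℕ}
    (h : NablaStableFrom ℓ ω M n₀) (h' : NablaStableFrom ℓ ω M' n₀) :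
    NablaStableFrom ℓ ω (M × M') n₀ := by
  intro n hn
  rw [nabla_prod, nabla_prod, h n hn, h' n hn, ideal_span_singleton_smul_prod]

theorem NablaStableFrom.pi {ι : Type*} {M : ι → Type*} [∀ i, AddCommGroup (M i)]
    [∀ i, Module R (M i)] {n₀ : ℕ} (h : ∀ i, NablaStableFrom ℓ ω (M i) n₀) :
    NablaStableFrom ℓ ω (∀ i, M i) n₀ := by
  intro n hn
  simp only [nabla_pi, h _ n hn, ideal_span_singleton_smul_pi]

theorem nablaStableFrom_of_isTorsionBy {m : ℕ} (h : Module.IsTorsionBy R M (ℓ ^ m)) :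
    NablaStableFrom ℓ ω M m := by
  have hbot : ∀ n ≥ m, nabla ℓ ω M n = ⊥ := fun n hn ↦ by
    refine eq_bot_iff.mpr fun x hx ↦ ?_
    obtain ⟨y, -, rfl⟩ := mem_ideal_span_singleton_smul.mp (mem_inf.mp hx).1
    rw [mem_bot, ← pow_sub_mul_pow ℓ (hn.trans n.le_succ), mul_smul, h, smul_zero]
  intro n hn
  rw [hbot n hn, hbot m le_rfl, smul_bot]

theorem nablaStableFrom_of_isSMulRegular {n₀ : ℕ} (hℓ : IsSMulRegular M ℓ)
    (hω : ∀ n ≥ n₀, Ideal.span {ω n} • (⊤ : Submodule R M) =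
      Ideal.span {ℓ ^ (n - n₀) * ω n₀} • ⊤) :
    NablaStableFrom ℓ ω M n₀ := by
  intro n hn
  rw [nabla, nabla, ideal_span_singleton_smul_inf (hℓ.pow _), ← Submodule.mul_smul,
    ← Submodule.mul_smul, Ideal.span_singleton_mul_span_singleton,
    Ideal.span_singleton_mul_span_singleton, ← pow_add, hω n hn,
    show n - n₀ + (n₀ + 1) = n + 1 by omega]

theorem nablaStableFrom_quotient_span_pow (m : ℕ) :
    NablaStableFrom ℓ ω (R ⧸ Ideal.span {ℓ ^ m}) m :=
  nablaStableFrom_of_isTorsionBy <| (Module.isTorsionBy_quotient_iff _ _).mpr fun x ↦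
    Ideal.mul_mem_right x _ (Ideal.mem_span_singleton_self _)

end Nabla

theorem exists_one_add_pow_sub_one_eq {R : Type*} [CommRing R] (x : R) (k : ℕ) :
    ∃ G, (1 + x) ^ k - 1 = x * (k + x * G) := by
  induction k with
  | zero => exact ⟨0, by simp⟩
  | succ k ih =>
    obtain ⟨G, hG⟩ := ih
    refine ⟨G + k + x * G, ?_⟩
    rw [pow_succ, show (1 + x) ^ k = x * (k + x * G) + 1 by rw [← hG, sub_add_cancel]]
    push_cast
    ring

theorem PowerSeries.isUnit_one_add_mk_X_mul {R : Type*} [CommRing R] (I : Ideal (PowerSeries R))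
    (z : PowerSeries R ⧸ I) : IsUnit (1 + Ideal.Quotient.mk I PowerSeries.X * z) := by
  obtain ⟨g, rfl⟩ := Ideal.Quotient.mk_surjective z
  have : IsUnit (1 + PowerSeries.X * g) := PowerSeries.isUnit_iff_constantCoeff.mpr (by simp)
  simpa using this.map (Ideal.Quotient.mk I)

section Iwasawa

open PowerSeries

variable {ℓ : ℕ} [Fact ℓ.Prime]

local notation "Λ" => PowerSeries ℤ_[ℓ]

theorem PadicInt.toZMod_eq_zero_iff {x : ℤ_[ℓ]} : PadicInt.toZMod x = 0 ↔ (ℓ : ℤ_[ℓ]) ∣ x := by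
  rw [← RingHom.mem_ker, PadicInt.ker_toZMod, PadicInt.maximalIdeal_eq_span_p,
    Ideal.mem_span_singleton]

theorem PowerSeries.natCast_dvd_of_map_toZMod_eq_zero {g : Λ} (hg : map PadicInt.toZMod g = 0) :
    (ℓ : Λ) ∣ g := by
  choose c hc using fun k ↦ PadicInt.toZMod_eq_zero_iff.mp <| by
    simpa using congrArg (coeff k) hg
  refine ⟨mk c, ext fun k ↦ ?_⟩
  rw [← map_natCast C, coeff_C_mul, coeff_mk, ← hc]

theorem IsDistinguishedAt.map_toZMod {f : Polynomial ℤ_[ℓ]} (hf : IsDistinguishedAt ℓ f) :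
    map PadicInt.toZMod (f : Λ) = X ^ f.natDegree := by
  ext k
  rw [coeff_map, Polynomial.coeff_coe, coeff_X_pow]
  rcases lt_trichotomy k f.natDegree with h | rfl | h
  · rw [if_neg h.ne, PadicInt.toZMod_eq_zero_iff.mpr (Ideal.mem_span_singleton.mp (hf.2 k h))]
  · rw [if_pos rfl, hf.1.coeff_natDegree, map_one]
  · rw [Polynomial.coeff_eq_zero_of_natDegree_lt h, if_neg h.ne', map_zero]

theorem IsDistinguishedAt.exists_eq_X_pow_add {f : Polynomial ℤ_[ℓ]} (hf : IsDistinguishedAt ℓ f) :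
    ∃ b : Λ, (f : Λ) = X ^ f.natDegree + (ℓ : Λ) * b := by
  obtain ⟨b, hb⟩ := natCast_dvd_of_map_toZMod_eq_zero (g := (f : Λ) - X ^ f.natDegree)
    (by rw [map_sub, hf.map_toZMod, map_pow, map_X, sub_self])
  exact ⟨b, by rw [← hb, add_sub_cancel]⟩

theorem IsDistinguishedAt.isSMulRegular_quotient {f : Polynomial ℤ_[ℓ]}
    (hf : IsDistinguishedAt ℓ f) : IsSMulRegular (Λ ⧸ Ideal.span {(f : Λ)}) (ℓ : Λ) := by
  refine isSMulRegular_iff_right_eq_zero_of_smul.mpr fun x hx ↦ ?_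
  obtain ⟨g, rfl⟩ := Ideal.Quotient.mk_surjective x
  obtain ⟨h, hh : (ℓ : Λ) * g = f * h⟩ :=
    Ideal.mem_span_singleton.mp (Ideal.Quotient.eq_zero_iff_mem.mp hx)
  have hφh : map PadicInt.toZMod h = 0 := by
    have := congrArg (map PadicInt.toZMod) hh
    rw [map_mul, map_mul, map_natCast, ← map_natCast C, ZMod.natCast_self, map_zero, zero_mul,
      hf.map_toZMod] at this
    exact (mul_eq_zero.mp this.symm).resolve_left (pow_ne_zero _ X_ne_zero)
  obtain ⟨h', rfl⟩ := natCast_dvd_of_map_toZMod_eq_zero hφh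
  have hℓ : (ℓ : Λ) ≠ 0 := fun h0 ↦
    (Fact.out : ℓ.Prime).ne_zero (by simpa using congrArg constantCoeff h0)
  rw [Ideal.Quotient.eq_zero_iff_mem, Ideal.mem_span_singleton]
  exact ⟨h', mul_left_cancel₀ hℓ (by rw [hh]; ring)⟩

theorem omegaIw_succ (n : ℕ) : omegaIw ℓ (n + 1) = (1 + omegaIw ℓ n) ^ ℓ - 1 := by
  rw [omegaIw, omegaIw, add_sub_cancel, pow_succ, pow_mul]

theorem exists_omegaIw_eq_X_pow_add (n : ℕ) :
    ∃ r : Λ, omegaIw ℓ n = X ^ ℓ ^ n + (ℓ : Λ) * X * r := by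
  obtain ⟨r, hr⟩ := exists_add_pow_prime_pow_eq (Fact.out : ℓ.Prime) (1 : Λ) X n
  exact ⟨r, by rw [omegaIw, hr, one_pow]; ring⟩

theorem IsDistinguishedAt.mk_natCast_mul_X_dvd_mk_omegaIw {f : Polynomial ℤ_[ℓ]}
    (hf : IsDistinguishedAt ℓ f) {n : ℕ} (hn : f.natDegree ≤ n) :
    Ideal.Quotient.mk (Ideal.span {(f : Λ)}) ((ℓ : Λ) * X) ∣
      Ideal.Quotient.mk (Ideal.span {(f : Λ)}) (omegaIw ℓ n) := by
  obtain ⟨r, hr⟩ := exists_omegaIw_eq_X_pow_add (ℓ := ℓ) n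
  obtain ⟨b, hb⟩ := hf.exists_eq_X_pow_add
  obtain ⟨e, he⟩ : ∃ e, ℓ ^ n = f.natDegree + e + 1 :=
    Nat.exists_eq_add_of_lt (hn.trans_lt (Nat.lt_pow_self (Fact.out : ℓ.Prime).one_lt))
  refine ⟨Ideal.Quotient.mk _ (r - b * X ^ e), ?_⟩
  rw [← map_mul, Ideal.Quotient.mk_eq_mk_iff_sub_mem, Ideal.mem_span_singleton]
  exact ⟨X ^ (e + 1), by rw [hr, he, hb]; ring⟩

theorem IsDistinguishedAt.associated_mk_omegaIw_succ {f : Polynomial ℤ_[ℓ]}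
    (hf : IsDistinguishedAt ℓ f) {n : ℕ} (hn : f.natDegree ≤ n) :
    Associated (Ideal.Quotient.mk (Ideal.span {(f : Λ)}) ((ℓ : Λ) * omegaIw ℓ n))
      (Ideal.Quotient.mk (Ideal.span {(f : Λ)}) (omegaIw ℓ (n + 1))) := by
  set π := Ideal.Quotient.mk (Ideal.span {(f : Λ)})
  obtain ⟨G, hG⟩ := exists_one_add_pow_sub_one_eq (omegaIw ℓ n) ℓ
  obtain ⟨c, hc⟩ := hf.mk_natCast_mul_X_dvd_mk_omegaIw hn
  have hu := isUnit_one_add_mk_X_mul (Ideal.span {(f : Λ)}) (c * π G)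
  refine ⟨hu.unit, ?_⟩
  rw [IsUnit.unit_spec, omegaIw_succ, hG]
  simp only [map_mul, map_add, map_natCast] at hc ⊢
  linear_combination (-(π (omegaIw ℓ n) * π G)) * hc

theorem IsDistinguishedAt.associated_mk_omegaIw {f : Polynomial ℤ_[ℓ]}
    (hf : IsDistinguishedAt ℓ f) {n₀ n : ℕ} (hd : f.natDegree ≤ n₀) (hn : n₀ ≤ n) :
    Associated (Ideal.Quotient.mk (Ideal.span {(f : Λ)}) ((ℓ : Λ) ^ (n - n₀) * omegaIw ℓ n₀))
      (Ideal.Quotient.mk (Ideal.span {(f : Λ)}) (omegaIw ℓ n)) := by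
  induction n, hn using Nat.le_induction with
  | base => simp
  | succ n hn ih =>
    rw [Nat.sub_add_comm hn, pow_succ', mul_assoc, map_mul]
    exact (ih.mul_left _).trans <| by
      simpa only [map_mul] using hf.associated_mk_omegaIw_succ (hd.trans hn)

theorem IsDistinguishedAt.nablaStableFrom {f : Polynomial ℤ_[ℓ]} (hf : IsDistinguishedAt ℓ f) :
    NablaStableFrom (ℓ : Λ) (omegaIw ℓ) (Λ ⧸ Ideal.span {(f : Λ)}) f.natDegree := by
  refine nablaStableFrom_of_isSMulRegular hf.isSMulRegular_quotient fun n hn ↦ ?_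
  have h := hf.associated_mk_omegaIw le_rfl hn
  rw [← Ideal.Quotient.algebraMap_eq] at h
  exact le_antisymm (Submodule.ideal_span_singleton_smul_le_of_dvd h.dvd)
    (Submodule.ideal_span_singleton_smul_le_of_dvd h.symm.dvd)

end Iwasawa

theorem elementary_torsion_partial_nabla_general (ℓ : ℕ) [Fact ℓ.Prime]
    (ι κ : Type) [Fintype ι] [Fintype κ]
    (f : ι → Polynomial ℤ_[ℓ]) (hf : ∀ i, IsDistinguishedAt ℓ (f i))
    (m : κ → ℕ) :
    ∃ n₀ : ℕ, ∀ n ≥ n₀,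
      (Ideal.span {(ℓ : PowerSeries ℤ_[ℓ]) ^ (n + 1)}) •
          (⊤ : Submodule (PowerSeries ℤ_[ℓ])
            (((i : ι) → PowerSeries ℤ_[ℓ] ⧸ Ideal.span {((f i : PowerSeries ℤ_[ℓ]))}) ×
              ((j : κ) → PowerSeries ℤ_[ℓ] ⧸ Ideal.span {(ℓ : PowerSeries ℤ_[ℓ]) ^ (m j)}))) ⊓
        (Ideal.span {omegaIw ℓ n}) • ⊤ =
      (Ideal.span {(ℓ : PowerSeries ℤ_[ℓ]) ^ (n - n₀)}) •
        ((Ideal.span {(ℓ : PowerSeries ℤ_[ℓ]) ^ (n₀ + 1)}) • ⊤ ⊓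
          (Ideal.span {omegaIw ℓ n₀}) • ⊤) := by
  let n₀ := max (Finset.univ.sup fun i ↦ (f i).natDegree) (Finset.univ.sup m)
  have hdistinguished : ∀ i, NablaStableFrom (ℓ : PowerSeries ℤ_[ℓ]) (omegaIw ℓ)
      (PowerSeries ℤ_[ℓ] ⧸ Ideal.span {(f i : PowerSeries ℤ_[ℓ])}) n₀ := fun i ↦
    (hf i).nablaStableFrom.mono <|
      (Finset.le_sup (f := fun i ↦ (f i).natDegree) (Finset.mem_univ i)).trans (le_max_left _ _)
  have hpow : ∀ j, NablaStableFrom (ℓ : PowerSeries ℤ_[ℓ]) (omegaIw ℓ)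
      (PowerSeries ℤ_[ℓ] ⧸ Ideal.span {(ℓ : PowerSeries ℤ_[ℓ]) ^ m j}) n₀ := fun j ↦
    (nablaStableFrom_quotient_span_pow (m j)).mono <|
      (Finset.le_sup (f := m) (Finset.mem_univ j)).trans (le_max_right _ _)
  exact ⟨n₀, (NablaStableFrom.pi hdistinguished).prod (NablaStableFrom.pi hpow)⟩

/-- For an elementary torsion `Λ`-module
`T = (⊕_i Λ/f_iΛ) ⊕ (⊕_j Λ/ℓ^(m_j)Λ)` with the `f_i` distinguished, setting
`∂ⁿT = ℓ^(n+1)T ∩ ω_nT`, there is `n₀` with `∂ⁿT = ℓ^(n−n₀)·∂^(n₀)T` for all `n ≥ n₀`. -/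
theorem elementary_torsion_partial_nabla (ℓ : ℕ) [Fact ℓ.Prime]
    (ι κ : Type) [Fintype ι] [Fintype κ]
    (f : ι → Polynomial ℤ_[ℓ]) (hf : ∀ i, IsDistinguishedAt ℓ (f i))
    (m : κ → ℕ) (hm : ∀ j, 0 < m j) :
    ∃ n₀ : ℕ, ∀ n ≥ n₀,
      (Ideal.span {(ℓ : PowerSeries ℤ_[ℓ]) ^ (n + 1)}) •
          (⊤ : Submodule (PowerSeries ℤ_[ℓ])
            (((i : ι) → PowerSeries ℤ_[ℓ] ⧸ Ideal.span {((f i : PowerSeries ℤ_[ℓ]))}) ×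
              ((j : κ) → PowerSeries ℤ_[ℓ] ⧸ Ideal.span {(ℓ : PowerSeries ℤ_[ℓ]) ^ (m j)}))) ⊓
        (Ideal.span {omegaIw ℓ n}) • ⊤ =
      (Ideal.span {(ℓ : PowerSeries ℤ_[ℓ]) ^ (n - n₀)}) •
        ((Ideal.span {(ℓ : PowerSeries ℤ_[ℓ]) ^ (n₀ + 1)}) • ⊤ ⊓
          (Ideal.span {omegaIw ℓ n₀}) • ⊤) :=
  elementary_torsion_partial_nabla_general ℓ ι κ f hf m
end
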